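/- If e^{−τn} < 1/2, then the set R_n = {x ∈ 𝕋² : Tⁿx ∈ B(x, e^{−nτ})} is the disjoint union over x ∈ P_n of the translates (Aⁿ − I)^{−1} B(0, e^{−nτ}) + x (mod 1); in particular R_n is a disjoint union of H_n = ∏_j |λ_jⁿ − 1| ellipses centered at the n-periodic points of T. -/

import Mathlib

open Filter

noncomputable def intVec (z : Fin 2 → ℤ) : EuclideanSpace ℝ (Fin 2) :=
  (WithLp.equiv 2 (Fin 2 → ℝ)).symm fun i => (z i : ℝ)

/-- The lift to `ℝ²` of the set `P_n = (Aⁿ - I)⁻¹ ℤ² (mod 1)` of `n`-periodic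
points of `T x = A x (mod 1)`. -/
noncomputable def periodicLift (A : Matrix (Fin 2) (Fin 2) ℤ) (n : ℕ) :
    Set (EuclideanSpace ℝ (Fin 2)) :=
  {x | ∃ z : Fin 2 → ℤ,
    Matrix.toEuclideanLin ((A ^ n).map (Int.cast : ℤ → ℝ) - 1) x = intVec z}

/-- The lift to `ℝ²` of the set `R_n = {x ∈ 𝕋² : Tⁿ x ∈ B(x, e^{-nτ})}`:
`Tⁿ x ∈ B(x, e^{-nτ})` iff `‖(Aⁿ - I) x - z‖ < e^{-nτ}` for some `z ∈ ℤ²`. -/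
noncomputable def Rn (A : Matrix (Fin 2) (Fin 2) ℤ) (τ : ℝ) (n : ℕ) :
    Set (EuclideanSpace ℝ (Fin 2)) :=
  {x | ∃ z : Fin 2 → ℤ,
    ‖Matrix.toEuclideanLin ((A ^ n).map (Int.cast : ℤ → ℝ) - 1) x - intVec z‖
      < Real.exp (-(n : ℝ) * τ)}

/-- The translate by an `n`-periodic point `p` of the ellipse
`(Aⁿ - I)⁻¹ B(0, e^{-nτ})`. -/
noncomputable def ellipsePiece (A : Matrix (Fin 2) (Fin 2) ℤ) (τ : ℝ) (n : ℕ)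
    (p : EuclideanSpace ℝ (Fin 2)) : Set (EuclideanSpace ℝ (Fin 2)) :=
  {x | ‖Matrix.toEuclideanLin ((A ^ n).map (Int.cast : ℤ → ℝ) - 1) (x - p)‖
    < Real.exp (-(n : ℝ) * τ)}

/-!
Put `M = Aⁿ - I`, so that `det M = (λ₁ⁿ - 1)(λ₂ⁿ - 1) ≠ 0` (for a `2 × 2` matrix,
`det (N - I) = det N - tr N + 1`, and `tr Aⁿ = λ₁ⁿ + λ₂ⁿ` by Cayley–Hamilton).
A point `x` lies in `R_n` iff `M x` is `e^{-nτ}`-close to some `z ∈ ℤ²`; writing `z = M p`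
this says `x ∈ p + M⁻¹ B(0, e^{-nτ})` with `p` periodic, and two such pieces are disjoint since
distinct points of `ℤ²` are at distance `≥ 1 > 2 e^{-nτ}`. Finally `z ↦ fract (M⁻¹ z)` maps
`ℤ²` onto the periodic points in `[0,1)²` with fibres the cosets of `M ℤ²`, so there are
`[ℤ² : M ℤ²] = |det M|` of them.
-/

open Matrix

namespace Matrix

variable {R : Type*} [CommRing R]

theorem sq_fin_two_eq (M : Matrix (Fin 2) (Fin 2) R) : M ^ 2 = M.trace • M - M.det • 1 := by
  ext i j
  fin_cases i <;> fin_cases j <;>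
    simp [sq, mul_apply, trace_fin_two, det_fin_two] <;> ring

theorem trace_pow_fin_two {M : Matrix (Fin 2) (Fin 2) R} {a b : R}
    (hsum : a + b = M.trace) (hprod : a * b = M.det) (n : ℕ) :
    (M ^ n).trace = a ^ n + b ^ n := by
  induction n using Nat.twoStepInduction with
  | zero => simp [trace_one]; norm_num
  | one => simpa using hsum.symm
  | more k ih₀ ih₁ =>
    rw [pow_add, sq_fin_two_eq, mul_sub, mul_smul_comm, mul_smul_comm, mul_one, ← pow_succ,
      trace_sub, trace_smul, trace_smul, ih₀, ih₁, ← hsum, ← hprod, smul_eq_mul, smul_eq_mul]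
    ring

theorem det_sub_one_fin_two (M : Matrix (Fin 2) (Fin 2) R) :
    (M - 1).det = M.det - M.trace + 1 := by
  simp only [det_fin_two, trace_fin_two, sub_apply, one_apply_eq, one_apply_ne, ne_eq,
    Fin.reduceEq, not_false_eq_true]
  ring

theorem det_pow_sub_one_fin_two {M : Matrix (Fin 2) (Fin 2) R} {a b : R}
    (hsum : a + b = M.trace) (hprod : a * b = M.det) (n : ℕ) :
    (M ^ n - 1).det = (a ^ n - 1) * (b ^ n - 1) := by
  rw [det_sub_one_fin_two, trace_pow_fin_two hsum hprod, det_pow, ← hprod]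
  ring

lemma det_map_intCast {ι : Type*} [Fintype ι] [DecidableEq ι] (B : Matrix ι ι ℤ) :
    (B.map ((↑) : ℤ → R)).det = B.det :=
  ((Int.castRingHom R).map_det B).symm

theorem intCast_det_pow_sub_one_fin_two {A : Matrix (Fin 2) (Fin 2) ℤ} {a b : R}
    (hsum : a + b = A.trace) (hprod : a * b = A.det) (n : ℕ) :
    ((A ^ n - 1).det : R) = (a ^ n - 1) * (b ^ n - 1) := by
  have hmap : (A ^ n - 1).map ((↑) : ℤ → R) = A.map (↑) ^ n - 1 := by
    rw [Matrix.map_sub _ Int.cast_sub, Matrix.map_one _ Int.cast_zero Int.cast_one]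
    exact congrArg (· - 1) (A.map_pow (Int.castRingHom R) n)
  rw [← det_map_intCast, hmap]
  exact det_pow_sub_one_fin_two (hsum.trans (AddMonoidHom.map_trace (Int.castAddHom R) A))
    (hprod.trans (det_map_intCast A).symm) n

end Matrix

lemma pow_ne_one_of_abs_ne_one {R : Type*} [Ring R] [LinearOrder R] [IsStrictOrderedRing R]
    {a : R} (ha : |a| ≠ 1) {n : ℕ} (hn : n ≠ 0) : a ^ n ≠ 1 := by
  rw [Ne, pow_eq_one_iff_of_ne_zero hn]
  rintro (rfl | ⟨rfl, -⟩) <;> simp at ha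

lemma Int.fract_comp_eq_fract_comp_iff {ι α : Type*} [Ring α] [LinearOrder α]
    [IsStrictOrderedRing α] [FloorRing α] {x y : ι → α} :
    Int.fract ∘ x = Int.fract ∘ y ↔ ∃ v : ι → ℤ, x - y = (↑) ∘ v := by
  simp only [funext_iff, Function.comp_apply, Int.fract_eq_fract, Pi.sub_apply]
  exact Classical.skolem

section LatticeCount

variable {ι : Type*} [Fintype ι]

lemma Matrix.map_intCast_mulVec (B : Matrix ι ι ℤ) (v : ι → ℤ) :
    B.map ((↑) : ℤ → ℝ) *ᵥ ((↑) ∘ v) = (↑) ∘ (B *ᵥ v) :=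
  funext fun i => ((Int.castRingHom ℝ).map_mulVec B v i).symm

variable [DecidableEq ι]

lemma Matrix.inv_mulVec_eq_iff {K : Type*} [CommRing K] {A : Matrix ι ι K} (hA : IsUnit A)
    (u v : ι → K) :
    A⁻¹ *ᵥ u = v ↔ u = A *ᵥ v := by
  have hA' := (isUnit_iff_isUnit_det A).mp hA
  constructor <;> rintro rfl
  · rw [mulVec_mulVec, mul_nonsing_inv _ hA', one_mulVec]
  · rw [mulVec_mulVec, nonsing_inv_mul _ hA', one_mulVec]

lemma Matrix.mulVec_inv_mulVec {K : Type*} [CommRing K] {A : Matrix ι ι K} (hA : IsUnit A)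
    (u : ι → K) :
    A *ᵥ (A⁻¹ *ᵥ u) = u :=
  ((inv_mulVec_eq_iff hA u _).mp rfl).symm

variable {B : Matrix ι ι ℤ} (hB : B.det ≠ 0)
include hB

lemma Matrix.isUnit_map_intCast : IsUnit (B.map ((↑) : ℤ → ℝ)) := by
  rw [isUnit_iff_isUnit_det, det_map_intCast, isUnit_iff_ne_zero]
  exact_mod_cast hB

lemma Matrix.exists_inv_mulVec_eq_intCast_iff (w : ι → ℤ) :
    (∃ v : ι → ℤ, (B.map ((↑) : ℤ → ℝ))⁻¹ *ᵥ ((↑) ∘ w) = (↑) ∘ v) ↔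
      w ∈ LinearMap.range B.mulVecLin := by
  refine exists_congr fun v => ?_
  rw [Matrix.inv_mulVec_eq_iff (isUnit_map_intCast hB), map_intCast_mulVec, mulVecLin_apply,
    eq_comm]
  exact (Int.cast_injective.comp_left).eq_iff

lemma Matrix.card_quotient_range_mulVecLin :
    Nat.card ((ι → ℤ) ⧸ LinearMap.range B.mulVecLin) = B.det.natAbs := by
  have hinj : Function.Injective B.mulVecLin := by
    rw [← LinearMap.ker_eq_bot, LinearMap.ker_eq_bot']
    intro v hv
    by_contra hv0
    exact hB (exists_mulVec_eq_zero_iff.mp ⟨v, hv0, hv⟩)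
  rw [← Submodule.natAbs_det_equiv _ (LinearEquiv.ofInjective _ hinj), ← LinearMap.det_toLin']
  rfl

theorem Matrix.ncard_intPreimage_inter_unitCube :
    {x : ι → ℝ | (∃ z : ι → ℤ, B.map ((↑) : ℤ → ℝ) *ᵥ x = (↑) ∘ z) ∧
      ∀ i, x i ∈ Set.Ico (0 : ℝ) 1}.ncard = B.det.natAbs := by
  set Bℝ := B.map ((↑) : ℤ → ℝ)
  set S := {x : ι → ℝ | (∃ z : ι → ℤ, Bℝ *ᵥ x = (↑) ∘ z) ∧ ∀ i, x i ∈ Set.Ico (0 : ℝ) 1}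
  have hU := isUnit_map_intCast hB
  have mem (z : ι → ℤ) : Int.fract ∘ (Bℝ⁻¹ *ᵥ ((↑) ∘ z)) ∈ S := by
    refine ⟨⟨z - B *ᵥ (Int.floor ∘ (Bℝ⁻¹ *ᵥ ((↑) ∘ z))), ?_⟩,
      fun i => ⟨Int.fract_nonneg _, Int.fract_lt_one _⟩⟩
    have hfract : Int.fract ∘ (Bℝ⁻¹ *ᵥ ((↑) ∘ z)) =
        Bℝ⁻¹ *ᵥ ((↑) ∘ z) - (↑) ∘ (Int.floor ∘ (Bℝ⁻¹ *ᵥ ((↑) ∘ z))) := rfl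
    rw [hfract, mulVec_sub, mulVec_inv_mulVec hU, map_intCast_mulVec]
    ext i
    simp
  let φ (z : ι → ℤ) : S := ⟨_, mem z⟩
  have hφ : Function.Surjective φ := by
    rintro ⟨x, ⟨z, hz⟩, hx⟩
    refine ⟨z, Subtype.ext ?_⟩
    change Int.fract ∘ (Bℝ⁻¹ *ᵥ ((↑) ∘ z)) = x
    rw [(inv_mulVec_eq_iff hU _ _).mpr hz.symm]
    exact funext fun i => Int.fract_eq_self.mpr (hx i)
  have hker (z w : ι → ℤ) : φ z = φ w ↔ z - w ∈ LinearMap.range B.mulVecLin := by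
    rw [Subtype.ext_iff, Int.fract_comp_eq_fract_comp_iff, ← mulVec_sub,
      ← exists_inv_mulVec_eq_intCast_iff hB]
    simp only [Function.comp_def, Pi.sub_apply, Int.cast_sub]
    rfl
  calc S.ncard = Nat.card (Quotient (Setoid.ker φ)) :=
        (Nat.card_congr (Setoid.quotientKerEquivOfSurjective φ hφ)).symm
    _ = Nat.card ((ι → ℤ) ⧸ LinearMap.range B.mulVecLin) :=
        Nat.card_congr (Quotient.congrRight fun z w => Setoid.ker_def.trans
          ((hker z w).trans (Submodule.quotientRel_def _).symm))
    _ = B.det.natAbs := card_quotient_range_mulVecLin hB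

end LatticeCount

lemma Matrix.bijective_toEuclideanLin {𝕜 n : Type*} [RCLike 𝕜] [Fintype n] [DecidableEq n]
    {M : Matrix n n 𝕜} (hM : IsUnit M) : Function.Bijective (toEuclideanLin M) :=
  (Module.End.isUnit_iff _).mp (hM.map (toLpLinAlgEquiv (R := 𝕜) 2))

section IntegerLattice

lemma intVec_sub (z w : Fin 2 → ℤ) : intVec z - intVec w = intVec (z - w) := by
  ext i
  simp [intVec]

lemma one_le_norm_intVec {z : Fin 2 → ℤ} (hz : z ≠ 0) : 1 ≤ ‖intVec z‖ := by
  obtain ⟨i, hi⟩ := Function.ne_iff.mp hz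
  calc (1 : ℝ) ≤ |(z i : ℝ)| := by exact_mod_cast Int.one_le_abs hi
    _ = ‖intVec z i‖ := rfl
    _ ≤ ‖intVec z‖ := PiLp.norm_apply_le _ i

lemma toEuclideanLin_eq_intVec_iff {M : Matrix (Fin 2) (Fin 2) ℝ} {x : EuclideanSpace ℝ (Fin 2)}
    {z : Fin 2 → ℤ} : toEuclideanLin M x = intVec z ↔ M *ᵥ x.ofLp = (↑) ∘ z :=
  (WithLp.toLp_injective 2).eq_iff

variable {E : Type*} [AddCommGroup E] [Module ℝ E] (L : E →ₗ[ℝ] EuclideanSpace ℝ (Fin 2))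

theorem setOf_exists_norm_sub_intVec_lt_eq_biUnion (hL : Function.Surjective L) (r : ℝ) :
    {x | ∃ z, ‖L x - intVec z‖ < r} =
      ⋃ p ∈ {p | ∃ z, L p = intVec z}, {x | ‖L (x - p)‖ < r} := by
  ext x
  simp only [Set.mem_ofPred_eq, Set.mem_iUnion, exists_prop, map_sub]
  constructor
  · rintro ⟨z, hz⟩
    obtain ⟨p, hp⟩ := hL (intVec z)
    exact ⟨p, ⟨z, hp⟩, hp ▸ hz⟩
  · rintro ⟨p, ⟨z, hp⟩, hx⟩
    exact ⟨z, hp ▸ hx⟩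

theorem pairwiseDisjoint_setOf_norm_lt (hL : Function.Injective L) {r : ℝ} (hr : r ≤ 1 / 2) :
    {p | ∃ z, L p = intVec z}.PairwiseDisjoint fun p => {x | ‖L (x - p)‖ < r} := by
  rintro p ⟨zp, hp⟩ q ⟨zq, hq⟩ hpq
  refine Set.disjoint_left.mpr fun x (hxp : ‖L (x - p)‖ < r) (hxq : ‖L (x - q)‖ < r) => ?_
  have hz : zp - zq ≠ 0 := sub_ne_zero.mpr fun h => hpq (hL (by rw [hp, hq, h]))
  have hdiff : intVec (zp - zq) = L (x - q) - L (x - p) := by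
    rw [← intVec_sub, ← hp, ← hq, map_sub, map_sub]
    abel
  have : (1 : ℝ) < 1 := calc
    1 ≤ ‖intVec (zp - zq)‖ := one_le_norm_intVec hz
    _ = ‖L (x - q) - L (x - p)‖ := by rw [hdiff]
    _ ≤ ‖L (x - q)‖ + ‖L (x - p)‖ := norm_sub_le _ _
    _ < r + r := add_lt_add hxq hxp
    _ ≤ 1 := by linarith
  exact lt_irrefl 1 this

end IntegerLattice

theorem ncard_toEuclideanLin_preimage_intVec_inter_unitSquare {B : Matrix (Fin 2) (Fin 2) ℤ}
    (hB : B.det ≠ 0) :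
    {x ∈ {x | ∃ z, toEuclideanLin (B.map ((↑) : ℤ → ℝ)) x = intVec z} |
      ∀ i, x i ∈ Set.Ico (0 : ℝ) 1}.ncard = B.det.natAbs := by
  rw [← ncard_intPreimage_inter_unitCube hB,
    ← Set.ncard_preimage_of_injective_subset_range (f := @WithLp.ofLp 2 (Fin 2 → ℝ))
      (WithLp.ofLp_injective 2)
      fun y _ => WithLp.ofLp_surjective 2 y]
  simp only [toEuclideanLin_eq_intVec_iff]
  rfl

theorem Rn_eq_disjoint_union_ellipses_general (A : Matrix (Fin 2) (Fin 2) ℤ)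
    (l₁ l₂ : ℝ)
    (hsum : l₁ + l₂ = (A.trace : ℝ)) (hprod : l₁ * l₂ = (A.det : ℝ))
    (h1 : |l₁| < 1) (h2 : 1 < |l₂|)
    (τ : ℝ) (n : ℕ) (hn : 1 ≤ n)
    (hsmall : Real.exp (-(n : ℝ) * τ) < 1 / 2) :
    (Rn A τ n = ⋃ p ∈ periodicLift A n, ellipsePiece A τ n p) ∧
    (periodicLift A n).PairwiseDisjoint (ellipsePiece A τ n) ∧
    (({x ∈ periodicLift A n | ∀ i, x i ∈ Set.Ico (0 : ℝ) 1}).ncard : ℝ)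
      = |l₁ ^ n - 1| * |l₂ ^ n - 1| := by
  have hcast : (A ^ n).map ((↑) : ℤ → ℝ) - 1 = (A ^ n - 1).map (↑) := by
    rw [Matrix.map_sub _ Int.cast_sub, Matrix.map_one _ Int.cast_zero Int.cast_one]
  have hdet := intCast_det_pow_sub_one_fin_two hsum hprod n
  have hn0 : n ≠ 0 := Nat.one_le_iff_ne_zero.mp hn
  have hdet0 : (A ^ n - 1).det ≠ 0 := by
    have := mul_ne_zero (sub_ne_zero.mpr (pow_ne_one_of_abs_ne_one h1.ne hn0))
      (sub_ne_zero.mpr (pow_ne_one_of_abs_ne_one h2.ne' hn0))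
    exact_mod_cast hdet ▸ this
  have hbij := bijective_toEuclideanLin (hcast ▸ isUnit_map_intCast hdet0)
  refine ⟨setOf_exists_norm_sub_intVec_lt_eq_biUnion _ hbij.surjective _,
    pairwiseDisjoint_setOf_norm_lt _ hbij.injective hsmall.le, ?_⟩
  rw [periodicLift, hcast, ncard_toEuclideanLin_preimage_intVec_inter_unitSquare hdet0,
    Nat.cast_natAbs, Int.cast_abs, hdet, abs_mul]

/-- If `e^{-τ n} < 1/2` then `R_n` is the disjoint union, over the `n`-periodic
points, of the translates of the ellipse `(Aⁿ - I)⁻¹ B(0, e^{-nτ})`; the number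
of such ellipses (mod 1, i.e. with centres in `[0,1)²`) is
`H_n = |λ₁ⁿ - 1| · |λ₂ⁿ - 1|`. -/
theorem Rn_eq_disjoint_union_ellipses (A : Matrix (Fin 2) (Fin 2) ℤ)
    (l₁ l₂ : ℝ)
    (hsum : l₁ + l₂ = (A.trace : ℝ)) (hprod : l₁ * l₂ = (A.det : ℝ))
    (h0 : 0 < |l₁|) (h1 : |l₁| < 1) (h2 : 1 < |l₂|)
    (τ : ℝ) (hτ : 0 < τ) (n : ℕ) (hn : 1 ≤ n)
    (hsmall : Real.exp (-(n : ℝ) * τ) < 1 / 2) :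
    (Rn A τ n = ⋃ p ∈ periodicLift A n, ellipsePiece A τ n p) ∧
    (periodicLift A n).PairwiseDisjoint (ellipsePiece A τ n) ∧
    (({x ∈ periodicLift A n | ∀ i, x i ∈ Set.Ico (0 : ℝ) 1}).ncard : ℝ)
      = |l₁ ^ n - 1| * |l₂ ^ n - 1| :=
  Rn_eq_disjoint_union_ellipses_general A l₁ l₂ hsum hprod h1 h2 τ n hn hsmall
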